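/- For every ε > 0 there is δ > 0 such that: if (ξ_1,...,ξ_M) and (η_1,...,η_M) are tuples of vectors in a Hilbert space H with Σ_i ‖ξ_i‖² ≤ 1, Σ_i ‖η_i‖² ≤ 1, and |⟨ξ_i, ξ_j⟩ − ⟨η_i, η_j⟩| < δ for all i, j ≤ M, and additionally H is infinite-dimensional and ⟨ξ_i, η_j⟩ = 0 for all i, j, then there exists a self-adjoint unitary U ∈ B(H) with ‖Uξ_j − η_j‖ < ε for all j ≤ M. -/

import Mathlib

/-!
Only the indices with `‖ξ j‖² + ‖η j‖² ≥ ε² / 2` matter, and there are at most `4 / ε²` of them: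
on the others any unitary moves `ξ j` to within `ε` of `η j`. For the `K` remaining indices the
Gram difference `E = G_ξ - G_η` has entries below `δ`, so `E + Kδ·1` is positive semidefinite.
Since `H` is infinite-dimensional there is room for fresh orthonormal directions in which to
enlarge each `ξ j` by vectors with Gram matrix `Kδ·1` and each `η j` by vectors with Gram matrix
`E + Kδ·1`. The enlarged tuples have equal Gram matrices and are still orthogonal to each other,
so the reflection in the span of their sums swaps them exactly; the enlargements have norm at
most `√((K + 1) δ)`.
-/

open scoped InnerProductSpace ComplexOrder MatrixOrder
open Submodule Set Matrix

section

variable {𝕜 E ι : Type*} [RCLike 𝕜] [NormedAddCommGroup E] [InnerProductSpace 𝕜 E]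

theorem exists_orthonormal_of_not_finiteDimensional [CompleteSpace E]
    (hE : ¬ FiniteDimensional 𝕜 E) (ι : Type*) [Fintype ι] : ∃ e : ι → E, Orthonormal 𝕜 e := by
  obtain ⟨w, b, -⟩ := exists_hilbertBasis 𝕜 E
  have : Infinite w := by
    rw [← not_finite_iff_infinite]
    intro hw
    have := Fintype.ofFinite w
    exact hE (.of_basis b.toOrthonormalBasis.toBasis)
  let emb : ι ↪ w :=
    (Fintype.equivFin ι).toEmbedding.trans (Fin.valEmbedding.trans (Infinite.natEmbedding w))
  exact ⟨b ∘ emb, b.orthonormal.comp emb emb.injective⟩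

theorem Submodule.exists_orthonormal_orthogonal [CompleteSpace E] (hE : ¬ FiniteDimensional 𝕜 E)
    (K : Submodule 𝕜 E) [FiniteDimensional 𝕜 K] (ι : Type*) [Fintype ι] :
    ∃ e : ι → E, Orthonormal 𝕜 e ∧ ∀ i, e i ∈ Kᗮ := by
  have hKperp : ¬ FiniteDimensional 𝕜 Kᗮ := by
    intro h
    apply hE
    have : FiniteDimensional 𝕜 (⊤ : Submodule 𝕜 E) := by
      rw [← K.sup_orthogonal_of_hasOrthogonalProjection]
      infer_instance
    exact topEquiv.finiteDimensional
  obtain ⟨e, he⟩ := exists_orthonormal_of_not_finiteDimensional hKperp ι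
  exact ⟨_, he.comp_linearIsometry Kᗮ.subtypeₗᵢ, fun i => (e i).2⟩

theorem Submodule.reflection_apply_eq_of_add_mem_of_sub_mem_orthogonal (K : Submodule 𝕜 E)
    [K.HasOrthogonalProjection] {x y : E} (hadd : x + y ∈ K) (hsub : x - y ∈ Kᗮ) :
    K.reflection x = y := by
  have h₁ := reflection_mem_subspace_eq_self hadd
  have h₂ := reflection_mem_subspace_orthogonalComplement_eq_neg hsub
  rw [map_add] at h₁
  rw [map_sub] at h₂
  have : (2 : 𝕜) • K.reflection x = (2 : 𝕜) • y := by
    rw [two_smul, two_smul]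
    linear_combination (norm := module) h₁ + h₂
  exact smul_right_injective E two_ne_zero this

theorem Submodule.isSelfAdjoint_reflection [CompleteSpace E] (K : Submodule 𝕜 E)
    [K.HasOrthogonalProjection] : IsSelfAdjoint (K.reflection : E →L[𝕜] E) := by
  simp [IsSelfAdjoint, reflection_symm]

theorem Submodule.coe_reflection_mul_coe_reflection (K : Submodule 𝕜 E)
    [K.HasOrthogonalProjection] : (K.reflection : E →L[𝕜] E) * K.reflection = 1 := by
  ext x
  simp

theorem IsSelfAdjoint.norm_map_of_mul_self_eq_one [CompleteSpace E] {U : E →L[𝕜] E}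
    (hU : IsSelfAdjoint U) (hUU : U * U = 1) (x : E) : ‖U x‖ = ‖x‖ :=
  ContinuousLinearMap.norm_map_of_mem_unitary
    (Unitary.mem_iff.mpr ⟨by rw [hU.star_eq, hUU], by rw [hU.star_eq, hUU]⟩) x

namespace Matrix

variable [Fintype ι]

theorem norm_star_dotProduct_mulVec_le {A : Matrix ι ι 𝕜} {δ : ℝ} (hA : ∀ i j, ‖A i j‖ ≤ δ)
    (x : ι → 𝕜) : ‖star x ⬝ᵥ A *ᵥ x‖ ≤ Fintype.card ι * δ * ∑ i, ‖x i‖ ^ 2 := by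
  rcases isEmpty_or_nonempty ι with hι | ⟨⟨i₀⟩⟩
  · simp
  have hδ : 0 ≤ δ := (norm_nonneg _).trans (hA i₀ i₀)
  calc ‖star x ⬝ᵥ A *ᵥ x‖ ≤ ∑ i, ∑ j, ‖x i‖ * (δ * ‖x j‖) := by
        simp only [dotProduct, mulVec]
        refine (norm_sum_le _ _).trans (Finset.sum_le_sum fun i _ => ?_)
        rw [norm_mul, Pi.star_apply, norm_star, ← Finset.mul_sum]
        gcongr
        refine (norm_sum_le _ _).trans (Finset.sum_le_sum fun j _ => ?_)
        rw [norm_mul]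
        gcongr
        exact hA i j
    _ = δ * (∑ i, ‖x i‖) ^ 2 := by
        simp_rw [sq, Finset.sum_mul_sum, Finset.mul_sum, mul_left_comm δ]
    _ ≤ δ * (Fintype.card ι * ∑ i, ‖x i‖ ^ 2) := by
        gcongr
        exact sq_sum_le_card_mul_sum_sq
    _ = _ := by ring

theorem IsHermitian.posSemidef_add_smul_one [DecidableEq ι] {A : Matrix ι ι 𝕜}
    (hA : A.IsHermitian) {δ : ℝ} (hAδ : ∀ i j, ‖A i j‖ ≤ δ) :
    (A + ((Fintype.card ι * δ : ℝ) : 𝕜) • 1).PosSemidef := by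
  have hH : (A + ((Fintype.card ι * δ : ℝ) : 𝕜) • 1).IsHermitian :=
    hA.add (isHermitian_one.smul (RCLike.conj_ofReal _))
  refine .of_dotProduct_mulVec_nonneg hH fun x => ?_
  rw [RCLike.nonneg_iff]
  refine ⟨?_, hH.im_star_dotProduct_mulVec_self x⟩
  have hxx : star x ⬝ᵥ x = ((∑ i, ‖x i‖ ^ 2 : ℝ) : 𝕜) := by
    simp [dotProduct, RCLike.conj_mul]
  rw [add_mulVec, dotProduct_add, smul_mulVec, one_mulVec, dotProduct_smul, hxx, smul_eq_mul,
    ← RCLike.ofReal_mul, map_add, RCLike.ofReal_re]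
  have hre := (abs_le.mp (RCLike.abs_re_le_norm (star x ⬝ᵥ A *ᵥ x))).1
  linarith [norm_star_dotProduct_mulVec_le hAδ x]

theorem PosSemidef.exists_gram_eq {A : Matrix ι ι 𝕜} (hA : A.PosSemidef) {f : ι → E}
    (hf : Orthonormal 𝕜 f) : ∃ w : ι → E, gram 𝕜 w = A ∧ ∀ i, w i ∈ span 𝕜 (range f) := by
  classical
  obtain ⟨B, rfl⟩ := CStarAlgebra.nonneg_iff_eq_star_mul_self.mp hA.nonneg
  refine ⟨fun i => ∑ k, B k i • f k, ?_,
    fun i => sum_mem fun k _ => smul_mem _ _ (subset_span (mem_range_self k))⟩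
  ext i j
  simp [hf.inner_sum, mul_apply]

end Matrix

theorem Matrix.gram_add_of_inner_eq_zero {u v : ι → E} (h : ∀ i j, ⟪u i, v j⟫_𝕜 = 0) :
    gram 𝕜 (u + v) = gram 𝕜 u + gram 𝕜 v := by
  ext i j
  simp [inner_add_left, inner_add_right, h, inner_eq_zero_symm.mp (h j i)]

theorem exists_selfAdjoint_involution_apply_eq [CompleteSpace E] [Finite ι] {x y : ι → E}
    (hgram : gram 𝕜 x = gram 𝕜 y) (hcross : ∀ i j, ⟪x i, y j⟫_𝕜 = ⟪y i, x j⟫_𝕜) :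
    ∃ U : E →L[𝕜] E, IsSelfAdjoint U ∧ U * U = 1 ∧ ∀ i, U (x i) = y i := by
  set K := span 𝕜 (range (x + y))
  have : FiniteDimensional 𝕜 K := FiniteDimensional.span_of_finite 𝕜 (finite_range _)
  refine ⟨K.reflection, K.isSelfAdjoint_reflection, K.coe_reflection_mul_coe_reflection,
    fun i => K.reflection_apply_eq_of_add_mem_of_sub_mem_orthogonal (subset_span ⟨i, rfl⟩) ?_⟩
  have : span 𝕜 {x i - y i} ⟂ K := by
    refine isOrtho_span.mpr ?_
    rintro _ rfl _ ⟨j, rfl⟩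
    have := congr_fun₂ hgram i j
    simp only [gram_apply] at this
    simp [inner_sub_left, inner_add_right, this, hcross i j]
  exact this (mem_span_singleton_self _)

theorem exists_add_gram_eq_of_gram_close [CompleteSpace E] (hE : ¬ FiniteDimensional 𝕜 E)
    [Fintype ι] {x y : ι → E} {δ : ℝ} (hδ : 0 ≤ δ)
    (hgram : ∀ i j, ‖⟪x i, x j⟫_𝕜 - ⟪y i, y j⟫_𝕜‖ ≤ δ) (horth : ∀ i j, ⟪x i, y j⟫_𝕜 = 0) :
    ∃ u w : ι → E, gram 𝕜 (x + u) = gram 𝕜 (y + w) ∧ (∀ i j, ⟪(x + u) i, (y + w) j⟫_𝕜 = 0) ∧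
      ∀ i, ‖u i‖ ^ 2 ≤ (Fintype.card ι + 1) * δ ∧ ‖w i‖ ^ 2 ≤ (Fintype.card ι + 1) * δ := by
  classical
  set d : ℝ := Fintype.card ι * δ
  set F := span 𝕜 (range x ∪ range y)
  have : FiniteDimensional 𝕜 F :=
    FiniteDimensional.span_of_finite 𝕜 ((finite_range x).union (finite_range y))
  have hxF : ∀ i, x i ∈ F := fun i => subset_span (.inl ⟨i, rfl⟩)
  have hyF : ∀ i, y i ∈ F := fun i => subset_span (.inr ⟨i, rfl⟩)
  obtain ⟨g, hg, hgF⟩ := F.exists_orthonormal_orthogonal hE (ι ⊕ ι)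
  set Se := span 𝕜 (range (g ∘ Sum.inl))
  set Sf := span 𝕜 (range (g ∘ Sum.inr))
  have hFSe : F ⟂ Se := IsOrtho.symm <| span_le.mpr <| range_subset_iff.mpr fun i => hgF _
  have hFSf : F ⟂ Sf := IsOrtho.symm <| span_le.mpr <| range_subset_iff.mpr fun i => hgF _
  have hSeSf : Se ⟂ Sf := isOrtho_span.mpr <| by
    rintro _ ⟨i, rfl⟩ _ ⟨j, rfl⟩
    exact hg.inner_eq_zero Sum.inl_ne_inr
  have hD : ((d : 𝕜) • 1 : Matrix ι ι 𝕜).PosSemidef :=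
    PosSemidef.one.smul (RCLike.ofReal_nonneg.mpr (by positivity))
  have hA : (gram 𝕜 x - gram 𝕜 y + (d : 𝕜) • 1).PosSemidef :=
    ((isHermitian_gram 𝕜 x).sub (isHermitian_gram 𝕜 y)).posSemidef_add_smul_one hgram
  obtain ⟨u, hu, huSe⟩ := hD.exists_gram_eq (hg.comp _ Sum.inl_injective)
  obtain ⟨w, hw, hwSf⟩ := hA.exists_gram_eq (hg.comp _ Sum.inr_injective)
  refine ⟨u, w, ?_, fun i j => ?_, fun i => ⟨?_, ?_⟩⟩
  · rw [gram_add_of_inner_eq_zero fun i j => hFSe.inner_eq (hxF i) (huSe j),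
      gram_add_of_inner_eq_zero fun i j => hFSf.inner_eq (hyF i) (hwSf j), hu, hw]
    abel
  · simp only [Pi.add_apply, inner_add_left, inner_add_right, horth,
      hFSf.inner_eq (hxF i) (hwSf j), hFSe.symm.inner_eq (huSe i) (hyF j),
      hSeSf.inner_eq (huSe i) (hwSf j), add_zero]
  · rw [norm_sq_eq_re_inner (𝕜 := 𝕜), ← gram_apply, hu]
    simp only [Matrix.smul_apply, one_apply_eq, smul_eq_mul, mul_one, RCLike.ofReal_re]
    linarith
  · have hre := RCLike.re_le_norm (⟪x i, x i⟫_𝕜 - ⟪y i, y i⟫_𝕜)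
    rw [norm_sq_eq_re_inner (𝕜 := 𝕜), ← gram_apply, hw]
    simp only [Matrix.add_apply, Matrix.sub_apply, gram_apply, Matrix.smul_apply, one_apply_eq,
      smul_eq_mul, mul_one, map_add, RCLike.ofReal_re]
    linarith [hgram i i]

theorem exists_selfAdjoint_involution_of_gram_close [CompleteSpace E]
    (hE : ¬ FiniteDimensional 𝕜 E) [Fintype ι] {x y : ι → E} {δ : ℝ} (hδ : 0 ≤ δ)
    (hgram : ∀ i j, ‖⟪x i, x j⟫_𝕜 - ⟪y i, y j⟫_𝕜‖ ≤ δ) (horth : ∀ i j, ⟪x i, y j⟫_𝕜 = 0) :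
    ∃ U : E →L[𝕜] E, IsSelfAdjoint U ∧ U * U = 1 ∧
      ∀ i, ‖U (x i) - y i‖ ≤ 2 * √((Fintype.card ι + 1) * δ) := by
  obtain ⟨u, w, hgram', horth', hsmall⟩ := exists_add_gram_eq_of_gram_close hE hδ hgram horth
  obtain ⟨U, hU, hUU, hUxy⟩ := exists_selfAdjoint_involution_apply_eq hgram'
    fun i j => by rw [horth', inner_eq_zero_symm.mp (horth' j i)]
  refine ⟨U, hU, hUU, fun i => ?_⟩
  have hswap : U (x i) - y i = w i - U (u i) := by
    have := hUxy i
    simp only [Pi.add_apply, map_add] at this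
    linear_combination (norm := module) this
  calc ‖U (x i) - y i‖ ≤ ‖w i‖ + ‖u i‖ := by
        rw [hswap, ← hU.norm_map_of_mul_self_eq_one hUU (u i)]
        exact norm_sub_le _ _
    _ ≤ 2 * √((Fintype.card ι + 1) * δ) := by
        linarith [Real.le_sqrt_of_sq_le (hsmall i).1, Real.le_sqrt_of_sq_le (hsmall i).2]

end

/-- Futamura–Kataoka–Kishimoto, Lemma 3.3: tuples of vectors with
entrywise close Gram matrices, spanning orthogonal subspaces of an
infinite-dimensional Hilbert space, are approximately swapped by a selfadjoint
unitary. -/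
theorem stmt_18 (ε : ℝ) (hε : 0 < ε) :
    ∃ δ > (0 : ℝ), ∀ (M : ℕ) (H : Type) (_ : NormedAddCommGroup H)
      (_ : InnerProductSpace ℂ H) (_ : CompleteSpace H),
      ¬ FiniteDimensional ℂ H →
      ∀ ξ η : Fin M → H,
      (∑ i, ‖ξ i‖ ^ 2) ≤ 1 → (∑ i, ‖η i‖ ^ 2) ≤ 1 →
      (∀ i j, ‖(inner ℂ (ξ i) (ξ j) : ℂ) - inner ℂ (η i) (η j)‖ < δ) →
      (∀ i j, (inner ℂ (ξ i) (η j) : ℂ) = 0) →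
      ∃ U : H →L[ℂ] H, IsSelfAdjoint U ∧ U * U = 1 ∧
        ∀ j, ‖U (ξ j) - η j‖ < ε := by
  refine ⟨ε ^ 4 / (8 * (4 + ε ^ 2)), by positivity, ?_⟩
  intro M H _ _ _ hH ξ η hξ hη hgram horth
  set B := Finset.univ.filter fun j => ε ^ 2 / 2 ≤ ‖ξ j‖ ^ 2 + ‖η j‖ ^ 2
  have hB : (B.card : ℝ) * ε ^ 2 ≤ 4 := by
    have hlow := B.card_nsmul_le_sum (fun j => ‖ξ j‖ ^ 2 + ‖η j‖ ^ 2) (ε ^ 2 / 2)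
      fun j hj => (Finset.mem_filter.mp hj).2
    have hup := Finset.sum_le_sum_of_subset_of_nonneg B.subset_univ
      (f := fun j => ‖ξ j‖ ^ 2 + ‖η j‖ ^ 2) fun _ _ _ => by positivity
    rw [nsmul_eq_mul] at hlow
    simp only [Finset.sum_add_distrib] at hlow hup
    linarith
  obtain ⟨U, hU, hUU, hUξ⟩ := exists_selfAdjoint_involution_of_gram_close hH
    (x := fun j : B => ξ j) (y := fun j : B => η j) (by positivity) (fun i j => (hgram i j).le)
    (fun i j => horth i j)
  refine ⟨U, hU, hUU, fun j => ?_⟩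
  by_cases hj : j ∈ B
  · calc ‖U (ξ j) - η j‖ ≤ 2 * √((B.card + 1) * (ε ^ 4 / (8 * (4 + ε ^ 2)))) := by
          simpa using hUξ ⟨j, hj⟩
      _ < ε := by
        rw [← lt_div_iff₀' two_pos, Real.sqrt_lt' (by positivity), mul_div_assoc',
          div_lt_iff₀ (by positivity)]
        nlinarith [mul_le_mul_of_nonneg_right hB (sq_nonneg ε), pow_pos hε 2, pow_pos hε 4]
  · have hsmall : ‖ξ j‖ ^ 2 + ‖η j‖ ^ 2 < ε ^ 2 / 2 := by simpa [B] using hj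
    calc ‖U (ξ j) - η j‖ ≤ ‖ξ j‖ + ‖η j‖ := by
          rw [← hU.norm_map_of_mul_self_eq_one hUU (ξ j)]
          exact norm_sub_le _ _
      _ < ε := lt_of_pow_lt_pow_left₀ 2 hε.le <| by
          nlinarith [sq_nonneg (‖ξ j‖ - ‖η j‖)]
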